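/- arXiv:2009.07607 — 4 statements merged into one kernel-verified Lean document; each statement's English description precedes it below -/
import Mathlib

section
/- For fixed complex numbers b and c, the ratio a^(c-b) * Γ(a+b) / Γ(a+c) tends to 1 as the complex number a tends to infinity with |arg(a)| < π (e.g. along any fixed ray avoiding the negative real axis). -/
/-!
Gauss's product gives `Γ z / Γ (z + w) = lim n^(-w) ∏_{j ≤ n} (1 + w / (z + j))`. Taking
logarithms, `w log n` telescopes against `w ∑_{j ≤ n} log (1 + (z + j)⁻¹) = w (log (z + n + 1) -
log z)`, so `Γ z / Γ (z + w) = exp (-w log z + ∑_j δ_j)` with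
`δ_j = log (1 + w / (z + j)) - w log (1 + (z + j)⁻¹) = O(‖z + j‖⁻²)`. For `z = a + b` with
`a = r e^{iθ}`, `|θ| < π`, one has `‖a + b + j‖ ≥ κ (r + j)`, so the series tends to `0` as
`r → ∞` by dominated convergence, while `log (a + b) - log a → 0`.
-/

open Filter Complex Topology

namespace Complex

theorem log_add_one_eq_log_add_log_one_add_inv {u : ℂ} (hu : 1 < ‖u‖) :
    log (u + 1) = log u + log (1 + u⁻¹) := by
  have hu0 : u ≠ 0 := norm_pos_iff.mp (one_pos.trans hu)
  have hinv : ‖u⁻¹‖ < 1 := by rw [norm_inv]; exact inv_lt_one_of_one_lt₀ hu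
  have hre : 0 ≤ (1 + u⁻¹).re := by
    have := neg_le_of_abs_le ((abs_re_le_norm u⁻¹).trans hinv.le)
    simp only [add_re, one_re]; linarith
  have hne : 1 + u⁻¹ ≠ 0 := by
    intro h
    rw [show u⁻¹ = -1 by linear_combination h, norm_neg, norm_one] at hinv
    exact lt_irrefl _ hinv
  -- `arg u` and `arg (1 + u⁻¹)` have opposite signs and `|arg (1 + u⁻¹)| ≤ π / 2`
  have harg := abs_le.mp (abs_arg_le_pi_div_two_iff.mpr hre)
  have him : (1 + u⁻¹).im = -u.im / normSq u := by simp [inv_im]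
  rw [← log_mul_eq_add_log_iff hu0 hne |>.mpr, mul_add, mul_one, mul_inv_cancel₀ hu0]
  have := neg_pi_lt_arg u
  have := arg_le_pi u
  have := Real.pi_pos
  rcases lt_trichotomy u.im 0 with h | h | h
  · have h1 : 0 ≤ arg (1 + u⁻¹) := by
      rw [arg_nonneg_iff, him]
      exact div_nonneg (by linarith) (normSq_nonneg u)
    have h2 : arg u < 0 := arg_neg_iff.mpr h
    constructor <;> linarith
  · have h1 : arg (1 + u⁻¹) = 0 := arg_eq_zero_iff.mpr ⟨hre, by simp [him, h]⟩
    constructor <;> linarith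
  · have h1 : arg (1 + u⁻¹) < 0 := by
      rw [arg_neg_iff, him]
      exact div_neg_of_neg_of_pos (by linarith) (normSq_pos.mpr hu0)
    have h2 : 0 ≤ arg u := arg_nonneg_iff.mpr h.le
    constructor <;> linarith

theorem norm_log_one_add_sub_self_le_sq {x : ℂ} (hx : ‖x‖ ≤ 1 / 2) :
    ‖log (1 + x) - x‖ ≤ ‖x‖ ^ 2 := by
  have h : (1 - ‖x‖)⁻¹ ≤ 2 := by rw [inv_le_comm₀ (by linarith) two_pos]; linarith
  calc ‖log (1 + x) - x‖ ≤ ‖x‖ ^ 2 * (1 - ‖x‖)⁻¹ / 2 := norm_log_one_add_sub_self_le (by linarith)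
    _ ≤ ‖x‖ ^ 2 * 2 / 2 := by gcongr
    _ = ‖x‖ ^ 2 := by ring

/-- The Gauss factor `1 + w / u` of `Γ z / Γ (z + w)` at `u = z + j`, renormalised by
`(1 + u⁻¹) ^ w` so that the logarithm is `O(‖u‖⁻²)`. -/
noncomputable def gammaRatioLogTerm (w u : ℂ) : ℂ :=
  log (1 + w / u) - w * log (1 + u⁻¹)

theorem norm_gammaRatioLogTerm_le {w u : ℂ} {ρ : ℝ} (hρ : 2 ≤ ρ) (hwρ : 2 * ‖w‖ ≤ ρ)
    (hu : ρ ≤ ‖u‖) : ‖gammaRatioLogTerm w u‖ ≤ (‖w‖ ^ 2 + ‖w‖) / ρ ^ 2 := by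
  have hu0 : 0 < ‖u‖ := by linarith
  have hwu : ‖w / u‖ ≤ 1 / 2 := by
    rw [norm_div, div_le_iff₀ hu0]; linarith
  have hinv : ‖u⁻¹‖ ≤ 1 / 2 := by
    rw [norm_inv, one_div]; exact inv_anti₀ two_pos (by linarith)
  have hsplit : gammaRatioLogTerm w u = (log (1 + w / u) - w / u) - w * (log (1 + u⁻¹) - u⁻¹) := by
    rw [gammaRatioLogTerm, div_eq_mul_inv]; ring
  calc ‖gammaRatioLogTerm w u‖
      ≤ ‖log (1 + w / u) - w / u‖ + ‖w‖ * ‖log (1 + u⁻¹) - u⁻¹‖ := by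
        rw [hsplit, ← norm_mul]; exact norm_sub_le _ _
    _ ≤ ‖w / u‖ ^ 2 + ‖w‖ * ‖u⁻¹‖ ^ 2 := by
        gcongr
        · exact norm_log_one_add_sub_self_le_sq hwu
        · exact norm_log_one_add_sub_self_le_sq hinv
    _ = (‖w‖ ^ 2 + ‖w‖) / ‖u‖ ^ 2 := by rw [norm_div, norm_inv]; field_simp
    _ ≤ (‖w‖ ^ 2 + ‖w‖) / ρ ^ 2 := by gcongr

theorem summable_gammaRatioLogTerm (w z : ℂ) :
    Summable fun j : ℕ => gammaRatioLogTerm w (z + j) := by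
  refine ((Real.summable_nat_pow_inv.mpr one_lt_two).mul_left (4 * (‖w‖ ^ 2 + ‖w‖)))
    |>.of_norm_bounded_eventually_nat ?_
  filter_upwards [eventually_ge_atTop ⌈2 * ‖z‖ + 4 * ‖w‖ + 4⌉₊] with j hj
  have hj' : 2 * ‖z‖ + 4 * ‖w‖ + 4 ≤ j := Nat.ceil_le.mp hj
  have hzj : (j : ℝ) / 2 ≤ ‖z + j‖ := by
    have := norm_sub_norm_le (j : ℂ) (-z)
    rw [norm_neg, Complex.norm_natCast, sub_neg_eq_add, add_comm] at this
    linarith [norm_nonneg w]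
  calc ‖gammaRatioLogTerm w (z + j)‖ ≤ (‖w‖ ^ 2 + ‖w‖) / ((j : ℝ) / 2) ^ 2 :=
        norm_gammaRatioLogTerm_le (by linarith [norm_nonneg z, norm_nonneg w])
          (by linarith [norm_nonneg z]) hzj
    _ = 4 * (‖w‖ ^ 2 + ‖w‖) * ((j : ℝ) ^ 2)⁻¹ := by field_simp; ring

theorem tendsto_log_mul_add_sub_log {ζ : ℂ} (hζ : ζ ∈ slitPlane) (b : ℂ) :
    Tendsto (fun r : ℝ => log (r * ζ + b) - log (r * ζ)) atTop (𝓝 0) := by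
  have hlim : Tendsto (fun r : ℝ => ζ + b * (r⁻¹ : ℝ)) atTop (𝓝 ζ) := by
    simpa using (tendsto_inv_atTop_zero.ofReal.const_mul b).const_add ζ
  have hlog := (hlim.clog hζ).sub_const (log ζ)
  rw [sub_self] at hlog
  refine hlog.congr' ?_
  filter_upwards [eventually_gt_atTop 0, hlim.eventually_ne (slitPlane_ne_zero hζ)]
    with r hr hne
  have hfac : (r : ℂ) * ζ + b = r * (ζ + b * (r⁻¹ : ℝ)) := by
    have : (r : ℂ) ≠ 0 := ofReal_ne_zero.mpr hr.ne'
    push_cast; field_simp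
  rw [hfac, log_ofReal_mul hr hne, log_ofReal_mul hr (slitPlane_ne_zero hζ)]
  ring

theorem GammaSeq_div_GammaSeq_add (z w : ℂ) {n : ℕ} (hn : n ≠ 0) (hz : ∀ j : ℕ, z + j ≠ 0) :
    GammaSeq z n / GammaSeq (z + w) n =
      (n : ℂ) ^ (-w) * ∏ j ∈ Finset.range (n + 1), (1 + w / (z + j)) := by
  have hn' : (n : ℂ) ≠ 0 := Nat.cast_ne_zero.mpr hn
  have hfac : (n.factorial : ℂ) ≠ 0 := Nat.cast_ne_zero.mpr n.factorial_ne_zero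
  have hpow : (n : ℂ) ^ z ≠ 0 := by simp [cpow_eq_zero_iff, hn']
  have hprod : ∏ j ∈ Finset.range (n + 1), (1 + w / (z + j)) =
      (∏ j ∈ Finset.range (n + 1), (z + w + j)) / ∏ j ∈ Finset.range (n + 1), (z + j) := by
    rw [← Finset.prod_div_distrib]
    refine Finset.prod_congr rfl fun j _ => ?_
    field_simp [hz j]
    ring
  rw [hprod, GammaSeq, GammaSeq, cpow_neg, cpow_add _ _ hn', div_div_div_eq]
  field_simp

theorem sum_range_log_one_add_inv {z : ℂ} (hz : ∀ j : ℕ, 1 < ‖z + j‖) (n : ℕ) :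
    ∑ j ∈ Finset.range n, log (1 + (z + j)⁻¹) = log (z + n) - log z := by
  rw [show log z = log (z + (0 : ℕ)) by simp, ← Finset.sum_range_sub (fun j : ℕ => log (z + j))]
  refine Finset.sum_congr rfl fun j _ => ?_
  rw [Nat.cast_succ, ← add_assoc, log_add_one_eq_log_add_log_one_add_inv (hz j)]
  ring

theorem Gamma_div_Gamma_add_eq_exp {z w : ℂ} (hz : ∀ j : ℕ, 1 < ‖z + j‖)
    (hzw : ∀ j : ℕ, z + w + j ≠ 0) :
    Gamma z / Gamma (z + w) = exp (-(w * log z) + ∑' j : ℕ, gammaRatioLogTerm w (z + j)) := by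
  have hz0 (j : ℕ) : z + j ≠ 0 := norm_pos_iff.mp (one_pos.trans (hz j))
  set S : ℕ → ℂ := fun n => ∑ j ∈ Finset.range (n + 1), gammaRatioLogTerm w (z + j)
  have hseq : ∀ᶠ n : ℕ in atTop, GammaSeq z n / GammaSeq (z + w) n =
      exp (-(w * log z) + w * (log (n + (z + 1)) - log n) + S n) := by
    filter_upwards [eventually_ne_atTop 0] with n hn
    have hlogs : ∑ j ∈ Finset.range (n + 1), log (1 + w / (z + j)) =
        S n + w * (log (n + (z + 1)) - log z) := by
      rw [show (n : ℂ) + (z + 1) = z + (n + 1 : ℕ) by push_cast; ring,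
        ← sum_range_log_one_add_inv hz, Finset.mul_sum, ← Finset.sum_add_distrib]
      refine Finset.sum_congr rfl fun j _ => ?_
      rw [gammaRatioLogTerm]; ring
    have hfactor (j : ℕ) : 1 + w / (z + j) ≠ 0 := by
      rw [show 1 + w / (z + j) = (z + w + j) / (z + j) by field_simp [hz0 j]; ring]
      exact div_ne_zero (hzw j) (hz0 j)
    rw [GammaSeq_div_GammaSeq_add z w hn hz0, cpow_def_of_ne_zero (Nat.cast_ne_zero.mpr hn),
      ← Finset.prod_congr rfl fun j _ => exp_log (hfactor j), ← exp_sum, hlogs, ← exp_add]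
    ring_nf
  have hΓ : Gamma (z + w) ≠ 0 :=
    Gamma_ne_zero fun m h => hzw m (by rw [h]; ring)
  have hlog : Tendsto (fun n : ℕ => log (n + (z + 1)) - log n) atTop (𝓝 0) := by
    simpa [Function.comp_def] using (tendsto_log_mul_add_sub_log one_mem_slitPlane (z + 1)).comp
      tendsto_natCast_atTop_atTop
  have hS : Tendsto S atTop (𝓝 (∑' j : ℕ, gammaRatioLogTerm w (z + j))) :=
    (summable_gammaRatioLogTerm w z).hasSum.tendsto_sum_nat.comp (tendsto_add_atTop_nat 1)
  refine tendsto_nhds_unique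
    (((GammaSeq_tendsto_Gamma z).div (GammaSeq_tendsto_Gamma (z + w)) hΓ).congr' hseq) ?_
  simpa using (((hlog.const_mul w).const_add (-(w * log z))).add hS).cexp

theorem tendsto_tsum_gammaRatioLogTerm (w : ℂ) {u : ℝ → ℕ → ℂ} {κ : ℝ} (hκ : 0 < κ)
    (hu : ∀ᶠ r in atTop, ∀ j : ℕ, κ * (r + j) ≤ ‖u r j‖) :
    Tendsto (fun r => ∑' j : ℕ, gammaRatioLogTerm w (u r j)) atTop (𝓝 0) := by
  set K := ‖w‖ ^ 2 + ‖w‖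
  have hlarge : ∀ᶠ r : ℝ in atTop,
      1 ≤ r ∧ 2 + 2 * ‖w‖ ≤ κ * r ∧ ∀ j : ℕ, κ * (r + j) ≤ ‖u r j‖ := by
    refine (eventually_ge_atTop 1).and (Eventually.and ?_ hu)
    exact (tendsto_id.const_mul_atTop hκ).eventually_ge_atTop _
  have hbound : ∀ᶠ r : ℝ in atTop, ∀ j : ℕ,
      ‖gammaRatioLogTerm w (u r j)‖ ≤ K / (κ * (r + j)) ^ 2 := by
    filter_upwards [hlarge] with r ⟨_, hrw, hur⟩ j
    have : κ * r ≤ κ * (r + j) := by gcongr; simp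
    exact norm_gammaRatioLogTerm_le (by linarith [norm_nonneg w]) (by linarith) (hur j)
  rw [← tsum_zero]
  refine tendsto_tsum_of_dominated_convergence (bound := fun j : ℕ => K / (κ * (1 + j)) ^ 2)
    ?_ (fun j => ?_) ?_
  · refine (((summable_nat_add_iff 1).mpr (Real.summable_nat_pow_inv.mpr one_lt_two)).mul_left
      (K / κ ^ 2)).congr fun j => ?_
    push_cast
    field_simp
    ring
  · refine squeeze_zero_norm' (hbound.mono fun r h => h j) (tendsto_const_nhds.div_atTop ?_)
    exact (tendsto_pow_atTop two_ne_zero).comp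
      ((tendsto_atTop_add_const_right _ _ tendsto_id).const_mul_atTop hκ)
  · filter_upwards [hbound, hlarge] with r h ⟨hr1, _, _⟩ j
    refine (h j).trans ?_
    gcongr

theorem sqrt_mul_add_le_norm_mul_add {ζ : ℂ} (hζ : ‖ζ‖ = 1) (r t : ℝ) :
    √((1 + ζ.re) / 2) * (r + t) ≤ ‖r * ζ + t‖ := by
  have hre := abs_le.mp (hζ ▸ abs_re_le_norm ζ)
  have him : ζ.im ^ 2 = 1 - ζ.re ^ 2 := by rw [← sq_norm_sub_sq_re, hζ, one_pow]
  refine le_of_sq_le_sq ?_ (norm_nonneg _)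
  rw [mul_pow, Real.sq_sqrt (by linarith), Complex.sq_norm, normSq_apply]
  simp only [add_re, add_im, re_ofReal_mul, im_ofReal_mul, ofReal_re, ofReal_im, add_zero]
  have hdiff : (r * ζ.re + t) * (r * ζ.re + t) + r * ζ.im * (r * ζ.im)
      - (1 + ζ.re) / 2 * (r + t) ^ 2 = (1 - ζ.re) / 2 * (r - t) ^ 2 := by
    linear_combination r ^ 2 * him
  nlinarith [mul_nonneg (sub_nonneg.mpr hre.2) (sq_nonneg (r - t))]

theorem exists_eventually_mul_le_norm_mul_add_add_natCast {ζ : ℂ} (hζ : ‖ζ‖ = 1)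
    (hre : -1 < ζ.re) (b : ℂ) :
    ∃ κ > 0, ∀ᶠ r : ℝ in atTop, ∀ j : ℕ, κ * (r + j) ≤ ‖r * ζ + b + j‖ := by
  set m := √((1 + ζ.re) / 2)
  have hm : 0 < m := Real.sqrt_pos.mpr (by linarith)
  refine ⟨m / 2, half_pos hm, ?_⟩
  filter_upwards [eventually_ge_atTop (2 * ‖b‖ / m)] with r hr j
  have hbr : ‖b‖ ≤ m / 2 * r := by rw [div_le_iff₀ hm] at hr; linarith
  have hj : m / 2 * r ≤ m / 2 * (r + j) := by gcongr; simp
  have hle := norm_sub_norm_le (r * ζ + j : ℂ) (-b)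
  rw [norm_neg, sub_neg_eq_add, add_right_comm] at hle
  have hsector := sqrt_mul_add_le_norm_mul_add hζ r j
  rw [ofReal_natCast] at hsector
  linarith

end Complex

/-- For fixed complex `b`, `c`, the ratio `a^(c-b) * Γ(a+b) / Γ(a+c)` tends to `1`
as `a → ∞` along any fixed ray `arg a = θ` with `|θ| < π`. -/
theorem gamma_ratio_tendsto_one (b c : ℂ) (θ : ℝ) (hθ : |θ| < Real.pi) :
    Tendsto (fun r : ℝ =>
        ((r : ℂ) * Complex.exp (θ * Complex.I)) ^ (c - b) *
          Complex.Gamma ((r : ℂ) * Complex.exp (θ * Complex.I) + b) /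
          Complex.Gamma ((r : ℂ) * Complex.exp (θ * Complex.I) + c))
      atTop (nhds 1) := by
  set ζ := exp (θ * I)
  have hθ' := abs_lt.mp hθ
  have hζ : ‖ζ‖ = 1 := norm_exp_ofReal_mul_I θ
  have hre : -1 < ζ.re := by
    rw [exp_ofReal_mul_I_re, ← Real.cos_abs]
    simpa using Real.cos_lt_cos_of_nonneg_of_le_pi (abs_nonneg θ) le_rfl hθ
  have hslit : ζ ∈ slitPlane := by
    refine mem_slitPlane_iff_arg.mpr ⟨?_, exp_ne_zero _⟩
    rw [arg_exp_mul_I, toIocMod_eq_self _ |>.mpr ⟨hθ'.1, by linarith⟩]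
    exact hθ'.2.ne
  obtain ⟨κ, hκ, hb⟩ := exists_eventually_mul_le_norm_mul_add_add_natCast hζ hre b
  obtain ⟨κ', hκ', hc⟩ := exists_eventually_mul_le_norm_mul_add_add_natCast hζ hre c
  have hlim := (((tendsto_log_mul_add_sub_log hslit b).const_mul (-(c - b))).add
    (tendsto_tsum_gammaRatioLogTerm (c - b) hκ hb)).cexp
  rw [mul_zero, zero_add, exp_zero] at hlim
  refine hlim.congr' ?_
  filter_upwards [hb, hc, eventually_gt_atTop κ⁻¹] with r hbr hcr hr
  have hr0 : 0 < r := (inv_pos.mpr hκ).trans hr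
  have hκr : 1 < κ * r := by simpa [hκ.ne'] using mul_lt_mul_of_pos_left hr hκ
  have h1 (j : ℕ) : 1 < ‖r * ζ + b + j‖ := by
    nlinarith [hbr j, j.cast_nonneg (α := ℝ)]
  have h2 (j : ℕ) : r * ζ + b + (c - b) + j ≠ 0 := by
    rw [← norm_pos_iff, show (r : ℂ) * ζ + b + (c - b) + j = r * ζ + c + j by ring]
    exact (by positivity : 0 < κ' * (r + j)).trans_le (hcr j)
  have hA : (r : ℂ) * ζ ≠ 0 := mul_ne_zero (ofReal_ne_zero.mpr hr0.ne') (exp_ne_zero _)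
  rw [mul_div_assoc, show (r : ℂ) * ζ + c = r * ζ + b + (c - b) by ring,
    Gamma_div_Gamma_add_eq_exp h1 h2, cpow_def_of_ne_zero hA, ← exp_add]
  ring_nf
end

section
/- Kummer's transformation: for γ ∉ ℤ≤0 and all z ∈ ℂ, e^z · ₁F₁(γ-β; γ; -z) = ₁F₁(β; γ; z). -/
open Filter Complex Polynomial

/-- The Kummer confluent hypergeometric series `₁F₁(b;c;z) = Σ (b)_n / ((c)_n n!) zⁿ`. -/
noncomputable def hyp1F1 (b c z : ℂ) : ℂ :=
  ∑' n : ℕ, (ascPochhammer ℂ n).eval b / ((ascPochhammer ℂ n).eval c * (n.factorial : ℂ)) * z ^ n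

lemma succ_left_eval (m : ℕ) (x : ℂ) :
    (ascPochhammer ℂ (m + 1)).eval x = x * (ascPochhammer ℂ m).eval (x + 1) := by
  rw [ascPochhammer_succ_left]
  simp [eval_comp]

/-- Absolute convergence of the ₁F₁ series. -/
lemma hyp_summable (b c z : ℂ) (hc : ∀ n : ℕ, (ascPochhammer ℂ n).eval c ≠ 0) :
    Summable (fun n : ℕ => ‖(ascPochhammer ℂ n).eval b /
      ((ascPochhammer ℂ n).eval c * (n.factorial : ℂ)) * z ^ n‖) := by
  set f : ℕ → ℂ := fun n => (ascPochhammer ℂ n).eval b /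
      ((ascPochhammer ℂ n).eval c * (n.factorial : ℂ)) * z ^ n with hf
  have key : ∀ᶠ n : ℕ in atTop, ‖f (n + 1)‖ ≤ (1 / 2 : ℝ) * ‖f n‖ := by
    filter_upwards [eventually_ge_atTop ⌈‖b‖⌉₊, eventually_ge_atTop ⌈2 * ‖c‖⌉₊,
      eventually_ge_atTop ⌈8 * ‖z‖⌉₊, eventually_ge_atTop 1] with n h1 h2 h3 h4
    have hb' : ‖b‖ ≤ (n : ℝ) := Nat.ceil_le.mp h1
    have hc2 : 2 * ‖c‖ ≤ (n : ℝ) := Nat.ceil_le.mp h2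
    have hz8 : 8 * ‖z‖ ≤ (n : ℝ) := Nat.ceil_le.mp h3
    have hcn : (ascPochhammer ℂ n).eval c ≠ 0 := hc n
    have hcn1 : c + (n : ℂ) ≠ 0 := by
      intro h
      apply hc (n + 1)
      rw [ascPochhammer_succ_eval, h, mul_zero]
    have hfa : ((n.factorial : ℂ)) ≠ 0 := Nat.cast_ne_zero.mpr n.factorial_ne_zero
    have hn1 : ((n : ℂ) + 1) ≠ 0 := Nat.cast_add_one_ne_zero n
    have hrec : f (n + 1) = f n * ((b + n) * z / ((c + n) * ((n : ℂ) + 1))) := by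
      simp only [hf, ascPochhammer_succ_eval, Nat.factorial_succ, pow_succ, Nat.cast_mul,
        Nat.cast_add, Nat.cast_one]
      field_simp
    rw [hrec, norm_mul, mul_comm ((1 : ℝ) / 2)]
    refine mul_le_mul_of_nonneg_left ?_ (norm_nonneg _)
    rw [norm_div, norm_mul, norm_mul]
    have hpos : 0 < ‖c + (n : ℂ)‖ * ‖(n : ℂ) + 1‖ :=
      mul_pos (norm_pos_iff.mpr hcn1) (norm_pos_iff.mpr hn1)
    rw [div_le_iff₀ hpos]
    have e1 : ‖b + (n : ℂ)‖ ≤ ‖b‖ + n := by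
      simpa using norm_add_le b (n : ℂ)
    have e2 : (n : ℝ) ≤ ‖c + (n : ℂ)‖ + ‖c‖ := by
      have : ‖(c + (n : ℂ)) - c‖ ≤ ‖c + (n : ℂ)‖ + ‖c‖ := norm_sub_le _ _
      simpa using this
    have e3 : ‖(n : ℂ) + 1‖ = (n : ℝ) + 1 := by
      rw [show ((n : ℂ) + 1) = ((n + 1 : ℕ) : ℂ) by push_cast; ring, Complex.norm_natCast]
      push_cast; ring
    rw [e3]
    have hz0 : (0 : ℝ) ≤ ‖z‖ := norm_nonneg z
    have hc0 : (0 : ℝ) ≤ ‖c‖ := norm_nonneg c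
    nlinarith [mul_le_mul_of_nonneg_right e1 hz0,
      mul_le_mul_of_nonneg_right hz8 (sub_nonneg.mpr hc2),
      mul_nonneg (sub_nonneg.mpr hz8) (sub_nonneg.mpr hc2),
      mul_le_mul_of_nonneg_left e2 hz0]
  refine summable_of_ratio_norm_eventually_le (r := 1 / 2) (by norm_num) ?_
  filter_upwards [key] with n hn
  rwa [Real.norm_of_nonneg (norm_nonneg _), Real.norm_of_nonneg (norm_nonneg _)]

/-- The Chu-Vandermonde identity for Pochhammer symbols:
`∑ₖ (-1)ᵏ C(n,k) (a)ₖ (c+k)_{n-k} = (c-a)ₙ`. -/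
lemma vandermonde_poch (a : ℂ) : ∀ n : ℕ, ∀ c : ℂ,
    ∑ k ∈ Finset.range (n + 1), (-1 : ℂ) ^ k * (n.choose k : ℂ) *
      (ascPochhammer ℂ k).eval a * (ascPochhammer ℂ (n - k)).eval (c + k) =
    (ascPochhammer ℂ n).eval (c - a) := by
  intro n
  induction n with
  | zero => intro c; simp
  | succ n ih =>
    intro c
    have pascal : ∀ i : ℕ, (((n + 1).choose (i + 1) : ℕ) : ℂ) =
        (n.choose i : ℂ) + (n.choose (i + 1) : ℂ) := by
      intro i
      rw [Nat.choose_succ_succ]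
      push_cast
      ring
    rw [Finset.sum_range_succ']
    have hsplit : ∀ i ∈ Finset.range (n + 1),
        (-1 : ℂ) ^ (i + 1) * ((n + 1).choose (i + 1) : ℂ) *
          (ascPochhammer ℂ (i + 1)).eval a *
          (ascPochhammer ℂ (n + 1 - (i + 1))).eval (c + (↑(i + 1) : ℂ)) =
        (-((-1 : ℂ) ^ i * (n.choose i : ℂ) * ((ascPochhammer ℂ i).eval a * (a + i)) *
            (ascPochhammer ℂ (n - i)).eval ((c + 1) + i))) +
        ((-1 : ℂ) ^ (i + 1) * (n.choose (i + 1) : ℂ) * (ascPochhammer ℂ (i + 1)).eval a *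
            (ascPochhammer ℂ (n - i)).eval (c + (↑(i + 1) : ℂ))) := by
      intro i hi
      have hni : n + 1 - (i + 1) = n - i := by omega
      rw [hni, pascal, ascPochhammer_succ_eval,
        show c + ((↑(i + 1) : ℂ)) = (c + 1) + (i : ℂ) by push_cast; ring]
      ring
    rw [Finset.sum_congr rfl hsplit, Finset.sum_add_distrib]
    -- Identify the second piece + the k = 0 term with a single sum
    have hD : ∑ i ∈ Finset.range (n + 1), (-1 : ℂ) ^ i * (n.choose i : ℂ) *
        (ascPochhammer ℂ i).eval a *
        ((c + i) * (ascPochhammer ℂ (n - i)).eval ((c + 1) + i)) =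
        (∑ i ∈ Finset.range (n + 1), (-1 : ℂ) ^ (i + 1) * (n.choose (i + 1) : ℂ) *
          (ascPochhammer ℂ (i + 1)).eval a *
          (ascPochhammer ℂ (n - i)).eval (c + (↑(i + 1) : ℂ))) +
        (-1 : ℂ) ^ 0 * ((n + 1).choose 0 : ℂ) * (ascPochhammer ℂ 0).eval a *
          (ascPochhammer ℂ (n + 1 - 0)).eval (c + (↑(0 : ℕ) : ℂ)) := by
      rw [Finset.sum_range_succ']
      congr 1
      · rw [Finset.sum_range_succ, Nat.choose_succ_self]
        simp only [Nat.cast_zero, mul_zero, zero_mul, add_zero]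
        refine Finset.sum_congr rfl fun i hi => ?_
        have hin : i < n := Finset.mem_range.mp hi
        have h1 : n - i = (n - (i + 1)) + 1 := by omega
        rw [h1, succ_left_eval (n - (i + 1)) (c + (↑(i + 1) : ℂ)),
          show c + ((↑(i + 1) : ℂ)) + 1 = (c + 1) + (↑(i + 1) : ℂ) by push_cast; ring]
      · simp [succ_left_eval n c]
    rw [add_assoc, ← hD, ← Finset.sum_add_distrib,
      show (ascPochhammer ℂ (n + 1)).eval (c - a) =
        (c - a) * (ascPochhammer ℂ n).eval ((c + 1) - a) by
          rw [succ_left_eval]; ring_nf,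
      ← ih (c + 1), Finset.mul_sum]
    refine Finset.sum_congr rfl fun i hi => ?_
    ring
  
/-- Kummer's transformation: for `γ` not a nonpositive integer and all `z ∈ ℂ`,
`e^z ₁F₁(γ-β; γ; -z) = ₁F₁(β; γ; z)`. -/
theorem kummer_transformation (β γ : ℂ) (hγ : ∀ m : ℕ, γ ≠ -(m : ℂ)) (z : ℂ) :
    Complex.exp z * hyp1F1 (γ - β) γ (-z) = hyp1F1 β γ z := by
  have hc : ∀ n : ℕ, (ascPochhammer ℂ n).eval γ ≠ 0 := by
    intro n h
    rw [ascPochhammer_eval_eq_zero_iff] at h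
    obtain ⟨k, -, hk⟩ := h
    exact hγ k (by linear_combination hk)
  have hfsum : Summable (fun n : ℕ => ‖z ^ n / (n.factorial : ℂ)‖) := by
    have := Real.summable_pow_div_factorial ‖z‖
    refine this.congr fun n => ?_
    rw [norm_div, norm_pow, Complex.norm_natCast]
  have hgsum := hyp_summable (γ - β) γ (-z) hc
  have hprod := tsum_mul_tsum_eq_tsum_sum_antidiagonal_of_summable_norm hgsum hfsum
  rw [Complex.exp_eq_exp_ℂ, NormedSpace.exp_eq_tsum_div]
  unfold hyp1F1
  rw [mul_comm, hprod]
  refine tsum_congr fun n => ?_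
  rw [Finset.Nat.sum_antidiagonal_eq_sum_range_succ_mk]
  have step : ∀ k ∈ Finset.range (n + 1),
      (ascPochhammer ℂ k).eval (γ - β) /
          ((ascPochhammer ℂ k).eval γ * (k.factorial : ℂ)) * (-z) ^ k *
        (z ^ (n - k) / ((n - k).factorial : ℂ)) =
      ((-1 : ℂ) ^ k * (n.choose k : ℂ) * (ascPochhammer ℂ k).eval (γ - β) *
          (ascPochhammer ℂ (n - k)).eval (γ + k)) *
        (z ^ n / ((ascPochhammer ℂ n).eval γ * (n.factorial : ℂ))) := by
    intro k hk
    have hkn : k ≤ n := Nat.lt_succ_iff.mp (Finset.mem_range.mp hk)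
    have hz : z ^ k * z ^ (n - k) = z ^ n := by
      rw [← pow_add]
      congr 1
      omega
    have hpoch : (ascPochhammer ℂ k).eval γ * (ascPochhammer ℂ (n - k)).eval (γ + k) =
        (ascPochhammer ℂ n).eval γ := by
      have h := congrArg (eval γ) (ascPochhammer_mul ℂ k (n - k))
      rw [Nat.add_sub_cancel' hkn] at h
      simpa [eval_comp] using h
    have hfac : (n.choose k : ℂ) * (k.factorial : ℂ) * ((n - k).factorial : ℂ) =
        (n.factorial : ℂ) := by
      exact_mod_cast congrArg (Nat.cast : ℕ → ℂ)
        (Nat.choose_mul_factorial_mul_factorial hkn)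
    have h1 : (ascPochhammer ℂ k).eval γ ≠ 0 := fun h => hc n (by rw [← hpoch, h, zero_mul])
    have h2 : (ascPochhammer ℂ (n - k)).eval (γ + k) ≠ 0 :=
      fun h => hc n (by rw [← hpoch, h, mul_zero])
    have h3 : ((k.factorial : ℂ)) ≠ 0 := Nat.cast_ne_zero.mpr k.factorial_ne_zero
    have h4 : (((n - k).factorial : ℂ)) ≠ 0 := Nat.cast_ne_zero.mpr (n - k).factorial_ne_zero
    have h5 : (n.choose k : ℂ) ≠ 0 := Nat.cast_ne_zero.mpr (Nat.choose_pos hkn).ne'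
    rw [← hz, ← hpoch, ← hfac, neg_pow]
    field_simp
  rw [Finset.sum_congr rfl step, ← Finset.sum_mul, vandermonde_poch (γ - β) n γ,
    show γ - (γ - β) = β by ring]
  ring
end

section
/- Let y₁(x) and y₂(x) be twice-differentiable functions on a domain U ⊂ ℂ avoiding 0 and 1, and suppose α(β-1)(β-γ)(α+1-β) ≠ 0. Define Ψ(y,y';x) = (α(β-γ+(α+1-β)x)y + x(x-1)(α+1-β)y') / (α(β-1)(β-γ)), and the 2×2 matrix Y(x) with first row (y₁, y₂) and second row (Ψ(y₁,y₁';x), Ψ(y₂,y₂';x)). Then Y satisfies Y' = (A₀/x + A₁/(x-1)) Y, with A₀ = (1/(α+1-β))·[[α(β-γ), α(1-β)(β-γ)],[α+1-γ, (1-β)(α+1-γ)]] and A₁ = (1/(α+1-β))·[[α(γ-α-1), α(β-1)(β-γ)],[γ-α-1, (β-1)(β-γ)]], if and only if y₁ and y₂ both satisfy the Gauss hypergeometric equation x(1-x)y'' + (γ-(α+β+1)x)y' - αβ y = 0. -/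
/-!
`Ψ` is built so that the first row of the system, `y' = (A₀/x + A₁/(x-1))₀₀ y + (…)₀₁ Ψ`,
holds identically, while the second row differs from `(Ψ(y,y';x))'` by the nonzero multiple
`(α+1-β)/(α(β-1)(β-γ))` of the hypergeometric expression `x(1-x)y'' + (γ-(α+β+1)x)y' - αβy`.
Hence each column `(y, Ψ(y,y'))` solves the system exactly where `y` solves the scalar equation.
-/

open Filter Complex Matrix

noncomputable section

variable (α β γ : ℂ)

def gaussPsi (x a b : ℂ) : ℂ :=
  (α * (β - γ + (α + 1 - β) * x) * a + x * (x - 1) * (α + 1 - β) * b) / (α * (β - 1) * (β - γ))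

def hypergeometricResidual (x a b c : ℂ) : ℂ :=
  x * (1 - x) * c + (γ - (α + β + 1) * x) * b - α * β * a

def gaussSystemMatrix (x : ℂ) : Matrix (Fin 2) (Fin 2) ℂ :=
  x⁻¹ • ((α + 1 - β)⁻¹ • !![α * (β - γ), α * (1 - β) * (β - γ);
                            α + 1 - γ, (1 - β) * (α + 1 - γ)]) +
  (x - 1)⁻¹ • ((α + 1 - β)⁻¹ • !![α * (γ - α - 1), α * (β - 1) * (β - γ);
                                  γ - α - 1, (β - 1) * (β - γ)])

variable {α β γ}

theorem hasDerivAt_gaussPsi {y y' : ℂ → ℂ} {x c : ℂ} (hy : HasDerivAt y (y' x) x)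
    (hy' : HasDerivAt y' c x) :
    HasDerivAt (fun t => gaussPsi α β γ t (y t) (y' t))
      ((α * (α + 1 - β) * y x + (α * (β - γ + (α + 1 - β) * x) + (2 * x - 1) * (α + 1 - β)) * y' x
        + x * (x - 1) * (α + 1 - β) * c) / (α * (β - 1) * (β - γ))) x := by
  have hp : HasDerivAt (fun t => α * (β - γ + (α + 1 - β) * t)) (α * (α + 1 - β)) x := by
    simpa using (((hasDerivAt_id x).const_mul (α + 1 - β)).const_add (β - γ)).const_mul α
  have hq : HasDerivAt (fun t => t * (t - 1) * (α + 1 - β)) ((2 * x - 1) * (α + 1 - β)) x :=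
    (((hasDerivAt_id' x).mul ((hasDerivAt_id' x).sub_const 1)).mul_const _).congr_deriv
      (by ring)
  exact (((hp.mul hy).add (hq.mul hy')).div_const _).congr_deriv (by ring)

section Algebra

variable {x : ℂ} (hα : α ≠ 0) (hβ1 : β - 1 ≠ 0) (hβγ : β - γ ≠ 0) (hαβ : α + 1 - β ≠ 0)
  (hx0 : x ≠ 0) (hx1 : x - 1 ≠ 0)
include hα hβ1 hβγ hαβ hx0 hx1

theorem gaussSystemMatrix_mulVec_zero (a b : ℂ) :
    (gaussSystemMatrix α β γ x *ᵥ ![a, gaussPsi α β γ x a b]) 0 = b := by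
  simp only [mulVec, dotProduct, gaussSystemMatrix, gaussPsi, smul_of, smul_cons, smul_eq_mul,
    smul_empty, Matrix.add_apply, of_apply, cons_val', cons_val_fin_one, cons_val_zero,
    cons_val_one, Fin.sum_univ_two]
  field_simp
  ring

theorem gaussSystemMatrix_mulVec_one (a b c : ℂ) :
    (gaussSystemMatrix α β γ x *ᵥ ![a, gaussPsi α β γ x a b]) 1 =
      (α * (α + 1 - β) * a + (α * (β - γ + (α + 1 - β) * x) + (2 * x - 1) * (α + 1 - β)) * b
        + x * (x - 1) * (α + 1 - β) * c) / (α * (β - 1) * (β - γ)) +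
      (α + 1 - β) / (α * (β - 1) * (β - γ)) * hypergeometricResidual α β γ x a b c := by
  simp only [mulVec, dotProduct, gaussSystemMatrix, gaussPsi, hypergeometricResidual, smul_of,
    smul_cons, smul_eq_mul, smul_empty, Matrix.add_apply, of_apply, cons_val', cons_val_fin_one,
    cons_val_zero, cons_val_one, Fin.sum_univ_two]
  field_simp
  ring

theorem gaussSystem_column_iff {y : ℂ → ℂ} (hy : DifferentiableAt ℂ y x)
    (hy' : DifferentiableAt ℂ (deriv y) x) :
    (∀ i, deriv (fun t => ![y t, gaussPsi α β γ t (y t) (deriv y t)] i) x =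
        (gaussSystemMatrix α β γ x *ᵥ ![y x, gaussPsi α β γ x (y x) (deriv y x)]) i) ↔
      hypergeometricResidual α β γ x (y x) (deriv y x) (deriv (deriv y) x) = 0 := by
  have hk : (α + 1 - β) / (α * (β - 1) * (β - γ)) ≠ 0 :=
    div_ne_zero hαβ (mul_ne_zero (mul_ne_zero hα hβ1) hβγ)
  simp only [Fin.forall_fin_two, cons_val_zero, cons_val_one, cons_val_fin_one]
  rw [gaussSystemMatrix_mulVec_zero hα hβ1 hβγ hαβ hx0 hx1,
    gaussSystemMatrix_mulVec_one hα hβ1 hβγ hαβ hx0 hx1 _ _ (deriv (deriv y) x),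
    (hasDerivAt_gaussPsi hy.hasDerivAt hy'.hasDerivAt).deriv]
  simp only [left_eq_add, mul_eq_zero, hk, false_or, true_and]

end Algebra

end

theorem gauss_matrix_system_iff_scalar_general (α β γ : ℂ)
    (h : α * (β - 1) * (β - γ) * (α + 1 - β) ≠ 0)
    (U : Set ℂ) (hU0 : (0 : ℂ) ∉ U) (hU1 : (1 : ℂ) ∉ U)
    (y₁ y₂ : ℂ → ℂ)
    (hy₁ : ∀ x ∈ U, DifferentiableAt ℂ y₁ x ∧ DifferentiableAt ℂ (deriv y₁) x)
    (hy₂ : ∀ x ∈ U, DifferentiableAt ℂ y₂ x ∧ DifferentiableAt ℂ (deriv y₂) x) :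
    let Ψ : (ℂ → ℂ) → ℂ → ℂ := fun y x =>
      (α * (β - γ + (α + 1 - β) * x) * y x + x * (x - 1) * (α + 1 - β) * deriv y x) /
        (α * (β - 1) * (β - γ))
    let A₀ : Matrix (Fin 2) (Fin 2) ℂ :=
      (α + 1 - β)⁻¹ • !![α * (β - γ), α * (1 - β) * (β - γ);
                          α + 1 - γ, (1 - β) * (α + 1 - γ)]
    let A₁ : Matrix (Fin 2) (Fin 2) ℂ :=
      (α + 1 - β)⁻¹ • !![α * (γ - α - 1), α * (β - 1) * (β - γ);
                          γ - α - 1, (β - 1) * (β - γ)]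
    let Y : ℂ → Matrix (Fin 2) (Fin 2) ℂ := fun x =>
      !![y₁ x, y₂ x; Ψ y₁ x, Ψ y₂ x]
    (∀ x ∈ U, ∀ i j : Fin 2,
        deriv (fun t => Y t i j) x = ((x⁻¹ • A₀ + (x - 1)⁻¹ • A₁) * Y x) i j) ↔
      (∀ x ∈ U,
        (x * (1 - x) * deriv (deriv y₁) x + (γ - (α + β + 1) * x) * deriv y₁ x
          - α * β * y₁ x = 0) ∧
        (x * (1 - x) * deriv (deriv y₂) x + (γ - (α + β + 1) * x) * deriv y₂ x
          - α * β * y₂ x = 0)) := by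
  intro Ψ A₀ A₁ Y
  obtain ⟨⟨⟨hα, hβ1⟩, hβγ⟩, hαβ⟩ : ((α ≠ 0 ∧ β - 1 ≠ 0) ∧ β - γ ≠ 0) ∧ α + 1 - β ≠ 0 := by
    simpa only [mul_ne_zero_iff] using h
  refine forall₂_congr fun x hx => ?_
  have hx0 : x ≠ 0 := fun e => hU0 (e ▸ hx)
  have hx1 : x - 1 ≠ 0 := sub_ne_zero.mpr fun e => hU1 (e ▸ hx)
  rw [forall_comm, Fin.forall_fin_two]
  simp only [Matrix.mul_apply', Y, of_apply, cons_val', cons_val_zero, cons_val_one, empty_val']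
  exact and_congr (gaussSystem_column_iff hα hβ1 hβγ hαβ hx0 hx1 (hy₁ x hx).1 (hy₁ x hx).2)
    (gaussSystem_column_iff hα hβ1 hβγ hαβ hx0 hx1 (hy₂ x hx).1 (hy₂ x hx).2)

/-- Lemma 1 of the paper: with
`Ψ(y,y';x) = (α(β-γ+(α+1-β)x) y + x(x-1)(α+1-β) y') / (α(β-1)(β-γ))`,
the 2×2 matrix `Y(x)` with rows `(y₁,y₂)` and `(Ψ(y₁,y₁';x), Ψ(y₂,y₂';x))`
satisfies `Y' = (A₀/x + A₁/(x-1)) Y` on `U` if and only if `y₁` and `y₂` both satisfy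
the Gauss hypergeometric equation `x(1-x) y'' + (γ-(α+β+1)x) y' - αβ y = 0` on `U`. -/
theorem gauss_matrix_system_iff_scalar (α β γ : ℂ)
    (h : α * (β - 1) * (β - γ) * (α + 1 - β) ≠ 0)
    (U : Set ℂ) (hU : IsOpen U) (hU0 : (0 : ℂ) ∉ U) (hU1 : (1 : ℂ) ∉ U)
    (y₁ y₂ : ℂ → ℂ)
    (hy₁ : ∀ x ∈ U, DifferentiableAt ℂ y₁ x ∧ DifferentiableAt ℂ (deriv y₁) x)
    (hy₂ : ∀ x ∈ U, DifferentiableAt ℂ y₂ x ∧ DifferentiableAt ℂ (deriv y₂) x) :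
    let Ψ : (ℂ → ℂ) → ℂ → ℂ := fun y x =>
      (α * (β - γ + (α + 1 - β) * x) * y x + x * (x - 1) * (α + 1 - β) * deriv y x) /
        (α * (β - 1) * (β - γ))
    let A₀ : Matrix (Fin 2) (Fin 2) ℂ :=
      (α + 1 - β)⁻¹ • !![α * (β - γ), α * (1 - β) * (β - γ);
                          α + 1 - γ, (1 - β) * (α + 1 - γ)]
    let A₁ : Matrix (Fin 2) (Fin 2) ℂ :=
      (α + 1 - β)⁻¹ • !![α * (γ - α - 1), α * (β - 1) * (β - γ);
                          γ - α - 1, (β - 1) * (β - γ)]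
    let Y : ℂ → Matrix (Fin 2) (Fin 2) ℂ := fun x =>
      !![y₁ x, y₂ x; Ψ y₁ x, Ψ y₂ x]
    (∀ x ∈ U, ∀ i j : Fin 2,
        deriv (fun t => Y t i j) x = ((x⁻¹ • A₀ + (x - 1)⁻¹ • A₁) * Y x) i j) ↔
      (∀ x ∈ U,
        (x * (1 - x) * deriv (deriv y₁) x + (γ - (α + β + 1) * x) * deriv y₁ x
          - α * β * y₁ x = 0) ∧
        (x * (1 - x) * deriv (deriv y₂) x + (γ - (α + β + 1) * x) * deriv y₂ x
          - α * β * y₂ x = 0)) :=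
  gauss_matrix_system_iff_scalar_general α β γ h U hU0 hU1 y₁ y₂ hy₁ hy₂
end

section
/- Confluence limit of the (1,2) Stokes multiplier: as α → ∞ along the ray arg(α) = +π/2, the quantity (-e^{iπ(γ-α-β)}/sin(π(α+β-γ))) · α^{γ-2β} · Γ(β+1-α)/Γ(γ+1-α-β) · π/(Γ(β)Γ(β+1-γ)) tends to 2πi·e^{iπ(γ-2β)}/(Γ(β)Γ(β+1-γ)). -/
/-!
Put `α = r i`, `w = β + 1 - α` and `δ = γ - 2β`, so that the Gamma quotient is `Γ(w) / Γ(w + δ)`.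
With `S = π(α + β - γ)` one has `sin S · e^{iS} = (1 - e^{2iS}) i / 2` and `e^{2iS} → 0`, so the
trigonometric prefactor tends to `2i`. Next `α^δ = e^{δ (log α - log w)} w^δ` with
`log α - log w → iπ`, which produces the phase `e^{iπδ}`. It remains to see
`w^δ Γ(w) / Γ(w + δ) → 1` as `Im w → -∞`. By Gauss's product this quantity is
`∏ⱼ (1 + 1/(w+j))^{-δ} (1 + δ/(w+j))`; each factor is `1 + O(|w + j|⁻²)` uniformly, and
`∑ⱼ |w + j|⁻² → 0`.
-/

open Filter Complex Topology Asymptotics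
open scoped Real

namespace Complex

lemma log_add_one_sub_log {v : ℂ} (hv : v.im < 0) : log (v + 1) - log v = log (1 + v⁻¹) := by
  have hv0 : v ≠ 0 := fun h => by simp [h] at hv
  have him : 0 < (1 + v⁻¹).im := by
    simpa [inv_im] using div_pos (neg_pos.2 hv) (normSq_pos.2 hv0)
  have hsum : arg v + arg (1 + v⁻¹) ∈ Set.Ioc (-π) π := by
    have := neg_pi_lt_arg v
    have := arg_le_pi (1 + v⁻¹)
    have := arg_neg_iff.2 hv
    have := arg_nonneg_iff.2 him.le
    constructor <;> linarith
  have hv1 : v + 1 = v * (1 + v⁻¹) := by field_simp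
  rw [hv1, log_mul hv0 (fun h => by simp [h] at him) hsum, add_sub_cancel_left]

lemma sq_norm_add_natCast (z : ℂ) (j : ℕ) : ‖z + j‖ ^ 2 = (z.re + j) ^ 2 + z.im ^ 2 := by
  rw [Complex.sq_norm, normSq_apply, add_re, add_im, natCast_re, natCast_im, add_zero, sq, sq]

lemma ne_neg_natCast_of_im_ne_zero {z : ℂ} (hz : z.im ≠ 0) (m : ℕ) : z ≠ -m :=
  fun h => hz (by simp [h])

lemma summable_inv_norm_add_natCast_sq (w : ℂ) : Summable fun j : ℕ => (‖w + j‖ ^ 2)⁻¹ := by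
  refine Summable.of_norm_bounded_eventually_nat
    ((Real.summable_nat_pow_inv.2 one_lt_two).mul_left 4) ?_
  filter_upwards [eventually_gt_atTop ⌈2 * ‖w‖⌉₊] with j hj
  have hj' : 2 * ‖w‖ < j := Nat.lt_of_ceil_lt hj
  have hj0 : (0 : ℝ) < j := by linarith [norm_nonneg w]
  have hlower : (j : ℝ) / 2 ≤ ‖w + j‖ := by
    have := norm_sub_norm_le (j : ℂ) (-w)
    rw [norm_natCast, norm_neg, sub_neg_eq_add, add_comm] at this
    linarith
  rw [Real.norm_of_nonneg (by positivity), ← div_eq_mul_inv, le_div_iff₀ (pow_pos hj0 2),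
    inv_mul_le_iff₀ (pow_pos (by linarith) 2)]
  nlinarith

lemma tendsto_tsum_inv_norm_sub_mul_I_add_natCast_sq (a : ℂ) :
    Tendsto (fun r : ℝ => ∑' j : ℕ, (‖a - r * I + j‖ ^ 2)⁻¹) atTop (𝓝 0) := by
  have hnorm (r : ℝ) (j : ℕ) : ‖a - r * I + j‖ ^ 2 = (a.re + j) ^ 2 + (r - a.im) ^ 2 := by
    rw [sq_norm_add_natCast, ← neg_sq (r - a.im), neg_sub]
    simp
  have hpointwise (j : ℕ) : Tendsto (fun r : ℝ => (‖a - r * I + j‖ ^ 2)⁻¹) atTop (𝓝 0) := by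
    simp only [hnorm]
    exact tendsto_inv_atTop_zero.comp <| tendsto_atTop_add_const_left _ _ <|
      (tendsto_pow_atTop two_ne_zero).comp (tendsto_atTop_add_const_right _ _ tendsto_id)
  have hsummable : Summable fun j : ℕ => ((a.re + j) ^ 2 + 1)⁻¹ := by
    simpa [sq_norm_add_natCast] using summable_inv_norm_add_natCast_sq (a.re + I)
  have hdominated : ∀ᶠ r : ℝ in atTop, ∀ j : ℕ,
      ‖(‖a - r * I + j‖ ^ 2)⁻¹‖ ≤ ((a.re + j) ^ 2 + 1)⁻¹ := by
    filter_upwards [eventually_ge_atTop (a.im + 1)] with r hr j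
    rw [Real.norm_of_nonneg (by positivity), hnorm]
    gcongr
    nlinarith
  simpa using tendsto_tsum_of_dominated_convergence hsummable hpointwise hdominated

lemma isBigO_exp_neg_mul_log_one_add_mul_one_add_mul_sub_one (δ : ℂ) :
    (fun u => exp (-(δ * log (1 + u))) * (1 + δ * u) - 1) =O[𝓝 0] fun u => u ^ 2 := by
  have hlog := log_sub_self_isBigO
  have hlog1 : (fun u => log (1 + u)) =O[𝓝 0] fun u => u := by
    have := hlog.trans ((isLittleO_pow_id one_lt_two).isBigO)
    simpa using this.add (isBigO_refl (fun u : ℂ => u) _)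
  have hx : Tendsto (fun u => -(δ * log (1 + u))) (𝓝 0) (𝓝 0) := by
    have : ContinuousAt (fun u => -(δ * log (1 + u))) 0 :=
      ((continuousAt_const.add continuousAt_id).clog (by simp)).const_mul δ |>.neg
    simpa using this.tendsto
  have hexp : (fun x => exp x - 1 - x) =O[𝓝 0] fun x => x ^ 2 := by
    simpa [Finset.sum_range_succ, sub_sub] using exp_sub_sum_range_isBigO_pow 2
  have hexp' := (hexp.comp_tendsto hx).trans (((hlog1.const_mul_left δ).neg_left).pow 2)
  have hbdd : (fun u : ℂ => 1 + δ * u) =O[𝓝 0] fun _ => (1 : ℂ) :=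
    ((continuous_const.add (continuous_const.mul continuous_id)).tendsto 0).isBigO_one ℂ
  have hmul {f : ℂ → ℂ} (hf : f =O[𝓝 0] fun u => u ^ 2) :
      (fun u => f u * (1 + δ * u)) =O[𝓝 0] fun u => u ^ 2 := by
    simpa using hf.mul hbdd
  have key (u : ℂ) : exp (-(δ * log (1 + u))) * (1 + δ * u) - 1 =
      (exp (-(δ * log (1 + u))) - 1 - -(δ * log (1 + u))) * (1 + δ * u)
        - δ * ((log (1 + u) - u) * (1 + δ * u)) - δ ^ 2 * u ^ 2 := by ring
  simp only [key]
  exact ((hmul hexp').sub ((hmul hlog).const_mul_left δ)).sub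
    ((isBigO_refl (fun u : ℂ => u ^ 2) _).const_mul_left (δ ^ 2))

/-- The `j`-th factor of Gauss's product for `w ^ δ * Γ(w) / Γ(w + δ)`, at `v = w + j`. -/
noncomputable def gaussFactor (δ v : ℂ) : ℂ :=
  exp (δ * (log v - log (v + 1))) * (1 + δ / v)

lemma exists_norm_gaussFactor_sub_one_le (δ : ℂ) :
    ∃ C R : ℝ, 0 ≤ C ∧ ∀ v : ℂ, v.im < -R → ‖gaussFactor δ v - 1‖ ≤ C * (‖v‖ ^ 2)⁻¹ := by
  obtain ⟨C, hC, hbound⟩ :=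
    (isBigO_exp_neg_mul_log_one_add_mul_one_add_mul_sub_one δ).exists_pos
  obtain ⟨ε, hε, hball⟩ := Metric.eventually_nhds_iff.1 hbound.bound
  refine ⟨C, ε⁻¹, hC.le, fun v hv => ?_⟩
  have hv0 : v.im < 0 := hv.trans (neg_neg_iff_pos.2 (inv_pos.2 hε))
  have hsmall : dist v⁻¹ 0 < ε := by
    rw [dist_zero_right, norm_inv]
    refine inv_lt_of_inv_lt₀ hε (lt_of_lt_of_le ?_ (abs_im_le_norm v))
    rw [abs_of_neg hv0]
    linarith
  have heq : gaussFactor δ v = exp (-(δ * log (1 + v⁻¹))) * (1 + δ * v⁻¹) := by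
    rw [gaussFactor, ← log_add_one_sub_log hv0, div_eq_mul_inv]
    ring_nf
  simpa [heq] using hball hsmall

lemma prod_gaussFactor (δ w : ℂ) (n : ℕ) :
    ∏ j ∈ Finset.range n, gaussFactor δ (w + j) =
      exp (δ * (log w - log (w + n))) * ∏ j ∈ Finset.range n, (1 + δ / (w + j)) := by
  have htelescope : ∑ j ∈ Finset.range n, δ * (log (w + j) - log (w + j + 1)) =
      δ * (log w - log (w + n)) := by
    rw [← Finset.mul_sum]
    simpa [add_assoc] using congrArg (δ * ·) (Finset.sum_range_sub' (fun j => log (w + j)) n)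
  simp only [gaussFactor, Finset.prod_mul_distrib, ← exp_sum, htelescope]

lemma GammaSeq_div_GammaSeq_add_mul_cpow {δ w : ℂ} (hw : ∀ m : ℕ, w ≠ -m)
    (hwδ : ∀ m : ℕ, w + δ ≠ -m) {n : ℕ} (hn : n ≠ 0) :
    GammaSeq w n / GammaSeq (w + δ) n * (n : ℂ) ^ δ =
      ∏ j ∈ Finset.range (n + 1), (1 + δ / (w + j)) := by
  have hs (j : ℕ) : w + j ≠ 0 := fun h => hw j (eq_neg_of_add_eq_zero_left h)
  have ht (j : ℕ) : w + δ + j ≠ 0 := fun h => hwδ j (eq_neg_of_add_eq_zero_left h)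
  have hn' : (n : ℂ) ≠ 0 := Nat.cast_ne_zero.2 hn
  have hfactor (j : ℕ) : 1 + δ / (w + j) = (w + δ + j) / (w + j) := by
    field_simp [hs j]; ring
  simp only [hfactor, Finset.prod_div_distrib, GammaSeq, cpow_add _ _ hn']
  have hpow (s : ℂ) : (n : ℂ) ^ s ≠ 0 := cpow_ne_zero_iff.2 (Or.inl hn')
  have := Finset.prod_ne_zero_iff.2 fun j (_ : j ∈ Finset.range (n + 1)) => hs j
  have := Finset.prod_ne_zero_iff.2 fun j (_ : j ∈ Finset.range (n + 1)) => ht j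
  field_simp [hpow, n.factorial_ne_zero]

lemma tendsto_log_add_natCast_add_one_sub_log (w : ℂ) :
    Tendsto (fun n : ℕ => log (w + (n + 1)) - log n) atTop (𝓝 0) := by
  have hq : Tendsto (fun n : ℕ => (w + (n + 1)) / n) atTop (𝓝 1) := by
    have := (tendsto_natCast_div_add_atTop (w + 1)).inv₀ one_ne_zero
    simp only [inv_div, inv_one] at this
    exact this.congr fun n => by ring_nf
  rw [← log_one]
  refine (hq.clog (by simp)).congr' ?_
  filter_upwards [eventually_ne_atTop 0, hq.eventually_ne one_ne_zero] with n hn hq0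
  have hn' : (0 : ℝ) < n := Nat.cast_pos.2 (Nat.pos_of_ne_zero hn)
  have hsplit : w + (n + 1) = ((n : ℝ) : ℂ) * ((w + (n + 1)) / n) := by
    push_cast; field_simp
  conv_rhs => rw [hsplit, log_ofReal_mul hn' hq0, natCast_log]
  ring

lemma tendsto_prod_gaussFactor {δ w : ℂ} (hw : ∀ m : ℕ, w ≠ -m) (hwδ : ∀ m : ℕ, w + δ ≠ -m) :
    Tendsto (fun n => ∏ j ∈ Finset.range n, gaussFactor δ (w + j)) atTop
      (𝓝 (w ^ δ * Gamma w / Gamma (w + δ))) := by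
  have hw0 : w ≠ 0 := by simpa using hw 0
  have hlim : Tendsto (fun n : ℕ => w ^ δ * (GammaSeq w n / GammaSeq (w + δ) n) *
      exp (-(δ * (log (w + (n + 1)) - log n)))) atTop
      (𝓝 (w ^ δ * (Gamma w / Gamma (w + δ)) * exp (-(δ * 0)))) :=
    (((GammaSeq_tendsto_Gamma w).div (GammaSeq_tendsto_Gamma (w + δ))
      (Gamma_ne_zero hwδ)).const_mul _).mul
      ((tendsto_log_add_natCast_add_one_sub_log w).const_mul δ).neg.cexp
  rw [← tendsto_add_atTop_iff_nat 1]
  simp only [mul_zero, neg_zero, exp_zero, mul_one, ← mul_div_assoc] at hlim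
  refine hlim.congr' ?_
  filter_upwards [eventually_ne_atTop 0] with n hn
  rw [prod_gaussFactor, ← GammaSeq_div_GammaSeq_add_mul_cpow hw hwδ hn,
    cpow_def_of_ne_zero hw0, cpow_def_of_ne_zero (Nat.cast_ne_zero.2 hn)]
  push_cast
  rw [show δ * (log w - log (w + (n + 1))) =
      log w * δ + -(δ * (log (w + (n + 1)) - log n)) - log n * δ by ring, exp_sub, exp_add]
  field_simp [exp_ne_zero]

lemma norm_cpow_mul_Gamma_div_Gamma_add_sub_one_le {δ w : ℂ} {C : ℝ} (hC : 0 ≤ C)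
    (hw : ∀ m : ℕ, w ≠ -m) (hwδ : ∀ m : ℕ, w + δ ≠ -m)
    (hfactor : ∀ j : ℕ, ‖gaussFactor δ (w + j) - 1‖ ≤ C * (‖w + j‖ ^ 2)⁻¹) :
    ‖w ^ δ * Gamma w / Gamma (w + δ) - 1‖ ≤
      Real.exp (C * ∑' j : ℕ, (‖w + j‖ ^ 2)⁻¹) - 1 := by
  refine le_of_tendsto ((tendsto_prod_gaussFactor hw hwδ).sub_const 1).norm
    (Eventually.of_forall fun n => ?_)
  have hprod := Finset.norm_prod_one_add_sub_one_le (Finset.range n)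
    fun j => gaussFactor δ (w + j) - 1
  simp only [add_sub_cancel] at hprod
  refine hprod.trans (sub_le_sub_right (Real.exp_le_exp.2 ?_) 1)
  calc ∑ j ∈ Finset.range n, ‖gaussFactor δ (w + j) - 1‖
      ≤ ∑ j ∈ Finset.range n, C * (‖w + j‖ ^ 2)⁻¹ := Finset.sum_le_sum fun j _ => hfactor j
    _ ≤ C * ∑' j : ℕ, (‖w + j‖ ^ 2)⁻¹ := by
      rw [← Finset.mul_sum]
      gcongr
      exact (summable_inv_norm_add_natCast_sq w).sum_le_tsum _ fun j _ => by positivity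

theorem tendsto_cpow_mul_Gamma_div_Gamma_add (a δ : ℂ) :
    Tendsto (fun r : ℝ => (a - r * I) ^ δ * Gamma (a - r * I) / Gamma (a - r * I + δ)) atTop
      (𝓝 1) := by
  obtain ⟨C, R, hC, hfactor⟩ := exists_norm_gaussFactor_sub_one_le δ
  have hbound : Tendsto (fun r : ℝ => Real.exp (C * ∑' j : ℕ, (‖a - r * I + j‖ ^ 2)⁻¹) - 1)
      atTop (𝓝 0) := by
    simpa using (((tendsto_tsum_inv_norm_sub_mul_I_add_natCast_sq a).const_mul C).rexp).sub_const 1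
  rw [tendsto_iff_norm_sub_tendsto_zero]
  refine squeeze_zero' (Eventually.of_forall fun r => norm_nonneg _) ?_ hbound
  filter_upwards [eventually_gt_atTop (a.im + R), eventually_gt_atTop (a.im + |δ.im|)]
    with r hrR hrδ
  have hwim : (a - r * I).im = a.im - r := by simp
  have hwδim : (a - r * I + δ).im = a.im - r + δ.im := by simp
  have hδ := le_abs_self δ.im
  have hδ' := abs_nonneg δ.im
  refine norm_cpow_mul_Gamma_div_Gamma_add_sub_one_le hC
    (ne_neg_natCast_of_im_ne_zero (by rw [hwim]; linarith))
    (ne_neg_natCast_of_im_ne_zero (by rw [hwδim]; linarith)) (fun j => hfactor _ ?_)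
  rw [add_im, natCast_im, add_zero, hwim]
  linarith

lemma tendsto_log_mul_I_sub_log_sub_mul_I (a : ℂ) :
    Tendsto (fun r : ℝ => log (r * I) - log (a - r * I)) atTop (𝓝 (π * I)) := by
  have hq : Tendsto (fun r : ℝ => a * (r : ℂ)⁻¹ - I) atTop (𝓝 (-I)) := by
    have := (continuous_ofReal.tendsto 0).comp tendsto_inv_atTop_zero
    simpa using (this.const_mul a).sub_const I
  have hlim := (hq.clog (by simp [mem_slitPlane_iff])).const_sub (π / 2 * I)
  rw [log_neg_I, show (π / 2 * I : ℂ) - -(π / 2) * I = π * I by ring] at hlim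
  refine hlim.congr' ?_
  filter_upwards [eventually_gt_atTop 0, hq.eventually_ne (neg_ne_zero.2 I_ne_zero)]
    with r hr hq0
  have hsplit : a - r * I = (r : ℂ) * (a * (r : ℂ)⁻¹ - I) := by
    field_simp [ofReal_ne_zero.2 hr.ne']
  rw [hsplit, log_ofReal_mul hr I_ne_zero, log_ofReal_mul hr hq0, log_I]
  ring

lemma tendsto_sin_mul_exp_mul_I : Tendsto (fun z => sin z * exp (z * I)) (comap im atTop)
    (𝓝 (I / 2)) := by
  have hexp : Tendsto (fun z => exp (2 * z * I)) (comap im atTop) (𝓝 0) := by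
    refine tendsto_exp_comap_re_atBot.comp (tendsto_comap_iff.2 ?_)
    have := (tendsto_comap (f := im) (x := atTop)).const_mul_atTop_of_neg
      (show (-2 : ℝ) < 0 by norm_num)
    simpa [Function.comp_def] using this
  have hid (z : ℂ) : sin z * exp (z * I) = (1 - exp (2 * z * I)) * I / 2 := by
    rw [sin, show 2 * z * I = z * I + z * I by ring, exp_add, neg_mul, exp_neg]
    field_simp [exp_ne_zero]
  simpa [hid] using ((hexp.const_sub 1).mul_const I).div_const 2

lemma tendsto_neg_exp_neg_mul_I_div_sin :
    Tendsto (fun z => -exp (-(z * I)) / sin z) (comap im atTop) (𝓝 (2 * I)) := by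
  have hlim := (tendsto_sin_mul_exp_mul_I.inv₀ (by simp)).neg
  rw [show -(I / 2)⁻¹ = 2 * I by rw [inv_div, div_I]; ring] at hlim
  refine hlim.congr fun z => ?_
  rw [exp_neg, mul_inv, neg_div, div_eq_mul_inv, mul_comm]

end Complex

theorem stokes_multiplier_12_limit_general (β γ : ℂ) :
    Tendsto (fun r : ℝ =>
        (-Complex.exp ((Real.pi : ℂ) * Complex.I * (γ - (r : ℂ) * Complex.I - β)) /
            Complex.sin ((Real.pi : ℂ) * ((r : ℂ) * Complex.I + β - γ))) *
          (((r : ℂ) * Complex.I) ^ (γ - 2 * β) *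
            (Complex.Gamma (β + 1 - (r : ℂ) * Complex.I) /
              Complex.Gamma (γ + 1 - (r : ℂ) * Complex.I - β))) *
          ((Real.pi : ℂ) / (Complex.Gamma β * Complex.Gamma (β + 1 - γ))))
      atTop
      (nhds (2 * (Real.pi : ℂ) * Complex.I *
          Complex.exp ((Real.pi : ℂ) * Complex.I * (γ - 2 * β)) /
        (Complex.Gamma β * Complex.Gamma (β + 1 - γ)))) := by
  set δ := γ - 2 * β
  have hS : Tendsto (fun r : ℝ => (π : ℂ) * (r * I + β - γ)) atTop (comap im atTop) := by
    refine tendsto_comap_iff.2 ?_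
    simp only [Function.comp_def, mul_im, ofReal_re, ofReal_im, zero_mul, add_zero]
    simpa [add_sub_assoc] using
      (tendsto_atTop_add_const_right _ (β.im - γ.im) tendsto_id).const_mul_atTop Real.pi_pos
  have hlim := ((tendsto_neg_exp_neg_mul_I_div_sin.comp hS).mul
    (((tendsto_log_mul_I_sub_log_sub_mul_I (β + 1)).const_mul δ).cexp.mul
      (tendsto_cpow_mul_Gamma_div_Gamma_add (β + 1) δ))).mul_const
    ((π : ℂ) / (Gamma β * Gamma (β + 1 - γ)))
  convert hlim.congr' ?_ using 2
  · rw [mul_comm δ]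
    ring
  · filter_upwards [eventually_gt_atTop 0, eventually_gt_atTop β.im] with r hr hrβ
    have hw : β + 1 - r * I ≠ 0 := fun h => by
      simpa [sub_eq_zero, hrβ.ne] using congrArg im h
    have hrI : (r * I : ℂ) ≠ 0 := mul_ne_zero (ofReal_ne_zero.2 hr.ne') I_ne_zero
    simp only [Function.comp_apply]
    rw [show γ + 1 - r * I - β = β + 1 - r * I + δ by ring,
      show (π : ℂ) * I * (γ - r * I - β) = -(π * (r * I + β - γ) * I) by ring,
      cpow_def_of_ne_zero hrI, cpow_def_of_ne_zero hw,
      show log (r * I) * δ = δ * (log (r * I) - log (β + 1 - r * I)) + log (β + 1 - r * I) * δ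
        by ring, exp_add]
    ring

/-- Confluence limit of the (1,2) Stokes multiplier: as `α → ∞` along the ray
`arg α = +π/2` (i.e. `α = r·i`),
`(-e^{iπ(γ-α-β)}/sin(π(α+β-γ))) · α^{γ-2β} · Γ(β+1-α)/Γ(γ+1-α-β) · π/(Γ(β)Γ(β+1-γ))`
tends to `2πi e^{iπ(γ-2β)}/(Γ(β)Γ(β+1-γ))`. -/
theorem stokes_multiplier_12_limit (β γ : ℂ)
    (h1 : ∀ m : ℕ, β ≠ -(m : ℂ)) (h2 : ∀ m : ℕ, β + 1 - γ ≠ -(m : ℂ)) :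
    Tendsto (fun r : ℝ =>
        (-Complex.exp ((Real.pi : ℂ) * Complex.I * (γ - (r : ℂ) * Complex.I - β)) /
            Complex.sin ((Real.pi : ℂ) * ((r : ℂ) * Complex.I + β - γ))) *
          (((r : ℂ) * Complex.I) ^ (γ - 2 * β) *
            (Complex.Gamma (β + 1 - (r : ℂ) * Complex.I) /
              Complex.Gamma (γ + 1 - (r : ℂ) * Complex.I - β))) *
          ((Real.pi : ℂ) / (Complex.Gamma β * Complex.Gamma (β + 1 - γ))))
      atTop
      (nhds (2 * (Real.pi : ℂ) * Complex.I *
          Complex.exp ((Real.pi : ℂ) * Complex.I * (γ - 2 * β)) /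
        (Complex.Gamma β * Complex.Gamma (β + 1 - γ)))) :=
  stokes_multiplier_12_limit_general β γ
end
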